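/- Let γ ≥ 0, let l, n ≥ 0 be integers, and let μ ∈ {1,−1} with (l,μ) ≠ (0,−1). Then ∫_Ω (1−r²)^γ (𝒱_{l,μ}(x) P_n^{(γ,l)}(2r²−1))² dx = [C_{l,μ} / (2(2n+γ+l+1))] · Γ(n+γ+1) Γ(n+l+1) / (Γ(n+1) Γ(n+γ+l+1)), where C_{0,1} := π/2 and C_{l,μ} := π for l ≥ 1. In particular this quantity is strictly positive and is the same for μ = 1 and μ = −1 when l ≥ 1. -/

import Mathlib

open MeasureTheory

noncomputable section

/-- Jacobi polynomial `P_n^{(a,b)}(t)`, extended by `0` for `n < 0`. -/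
def jacobiP (a b : ℝ) (n : ℤ) (t : ℝ) : ℝ :=
  if 0 ≤ n then
    (-1 : ℝ) ^ n.toNat *
      (Real.Gamma ((n.toNat : ℝ) + 1 + b) /
        ((n.toNat.factorial : ℝ) * Real.Gamma ((n.toNat : ℝ) + 1 + a + b))) *
      ∑ j ∈ Finset.range (n.toNat + 1),
        (-1 : ℝ) ^ j * (2 : ℝ) ^ (-(j : ℤ)) * (n.toNat.choose j : ℝ) *
          (Real.Gamma ((n.toNat : ℝ) + (j : ℝ) + 1 + a + b) / Real.Gamma ((j : ℝ) + 1 + b)) *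
          (1 + t) ^ j
  else 0

/-- Solid harmonic `𝒱_{l,μ}` on `ℝ²`: `𝒱_{0,1} = 1/2`, and for `l ≥ 1`,
`𝒱_{l,1} = Re((x+iy)^l) = r^l cos(lφ)`, `𝒱_{l,-1} = Im((x+iy)^l) = r^l sin(lφ)`;
it is `0` for `l < 0` and for `(l,μ) = (0,-1)`. -/
def solidH (l : ℤ) (μ : ℤ) (p : ℝ × ℝ) : ℝ :=
  if l = 0 then (if μ = 1 then 1 / 2 else 0)
  else if 0 < l then
    (if μ = 1 then (((p.1 : ℂ) + (p.2 : ℂ) * Complex.I) ^ l.toNat).re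
     else if μ = -1 then (((p.1 : ℂ) + (p.2 : ℂ) * Complex.I) ^ l.toNat).im
     else 0)
  else 0

/-- The open unit disk in `ℝ²`. -/
def unitDisk : Set (ℝ × ℝ) := {p : ℝ × ℝ | p.1 ^ 2 + p.2 ^ 2 < 1}

/-- Squared weighted `L²` norm `‖f‖_β² = ∫_Ω (1-r²)^β f²`. -/
def wnormSq (β : ℝ) (f : ℝ × ℝ → ℝ) : ℝ :=
  ∫ p in unitDisk, (1 - (p.1 ^ 2 + p.2 ^ 2)) ^ β * f p ^ 2

/-- `h_{l,n} = ‖𝒱_{l,μ} P_n^{(γ,l)}(2r²-1)‖_γ`. -/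
def hln (γ : ℝ) (l n : ℕ) : ℝ :=
  Real.sqrt (wnormSq γ (fun p =>
    solidH (l : ℤ) 1 p * jacobiP γ (l : ℝ) (n : ℤ) (2 * (p.1 ^ 2 + p.2 ^ 2) - 1)))

/-- Index set `I`: triples `(l,n,μ)` with `μ ∈ {1,-1}` (encoded as `Bool`, `true ↦ 1`),
excluding `l = 0, μ = -1`. -/
abbrev IdxI : Type := {x : ℕ × ℕ × Bool // ¬(x.1 = 0 ∧ x.2.2 = false)}

def lIdx (i : IdxI) : ℕ := i.1.1
def nIdx (i : IdxI) : ℕ := i.1.2.1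
def muIdx (i : IdxI) : ℤ := if i.1.2.2 then 1 else -1

def hh (γ : ℝ) (i : IdxI) : ℝ := hln γ (lIdx i) (nIdx i)

/-- The weight `(n+1)^σ (n+l+1)^σ`. -/
def wt (σ : ℝ) (i : IdxI) : ℝ :=
  ((nIdx i : ℝ) + 1) ^ σ * ((nIdx i : ℝ) + (lIdx i : ℝ) + 1) ^ σ

/-- The basis function `𝒱_{l,μ}(x) P_n^{(γ,l)}(2r²-1)`. -/
def basisF (γ : ℝ) (i : IdxI) (p : ℝ × ℝ) : ℝ :=
  solidH (lIdx i : ℤ) (muIdx i) p *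
    jacobiP γ (lIdx i : ℝ) (nIdx i : ℤ) (2 * (p.1 ^ 2 + p.2 ^ 2) - 1)

/-- Partial derivative in `x`. -/
def pdx (f : ℝ × ℝ → ℝ) : ℝ × ℝ → ℝ := fun p => fderiv ℝ f p (1, 0)
/-- Partial derivative in `y`. -/
def pdy (f : ℝ × ℝ → ℝ) : ℝ × ℝ → ℝ := fun p => fderiv ℝ f p (0, 1)

/-- `C_{l,μ}`. -/
def Cc (l : ℕ) : ℝ := if l = 0 then Real.pi / 2 else Real.pi

/-- Objective functional in the modified K-functional. -/
def objVal (γ : ℝ) (k m : ℕ) (t : ℝ) (u v : IdxI → ℝ) : ℝ :=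
  ∑' i : IdxI, (wt (k : ℝ) i * (u i - v i) ^ 2 + t ^ 2 * wt (m : ℝ) i * v i ^ 2) * hh γ i ^ 2

/-- Admissibility: `v ∈ H̃^m_γ`. -/
def admissible (γ : ℝ) (m : ℕ) (v : IdxI → ℝ) : Prop :=
  Summable fun i : IdxI => wt (m : ℝ) i * v i ^ 2 * hh γ i ^ 2

/-- The squared modified K-functional `K̃(t,u)²`. -/
def KtSq (γ : ℝ) (k m : ℕ) (u : IdxI → ℝ) (t : ℝ) : ℝ :=
  sInf {S : ℝ | ∃ v : IdxI → ℝ, admissible γ m v ∧ S = objVal γ k m t u v}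

/-- Pseudo-eigenvalue `λ_{l,n}` of the fractional Laplacian. -/
def lamFL (α : ℝ) (l n : ℕ) : ℝ :=
  (2 : ℝ) ^ α * Real.Gamma ((n : ℝ) + 1 + α / 2) *
      Real.Gamma ((n : ℝ) + (l : ℝ) + 1 + α / 2) /
    (Real.Gamma ((n : ℝ) + 1) * Real.Gamma ((n : ℝ) + (l : ℝ) + 1))

/-- Euclidean norm on `ℝ²` (as `ℝ × ℝ`). -/
def enorm2 (p : ℝ × ℝ) : ℝ := Real.sqrt (p.1 ^ 2 + p.2 ^ 2)


/-!
In polar coordinates `𝒱_{l,μ}(r cos θ, r sin θ) = r^l a(θ)`, so the integral splits into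
`∫_{-π}^{π} a²`, which is `C_{l,μ}`, times a radial integral that the substitution `u = r²` turns
into half the Jacobi norm `∫₀¹ (1-u)^a u^b P_n^{(a,b)}(2u-1)² du` with `a = γ`, `b = l`.

For the Jacobi norm, expand `P_n^{(a,b)}(2u-1) = ∑ cᵢ uⁱ` and integrate against Beta weights.
The moment `∫₀¹ (1-u)^{a+k} u^b P_n^{(a,b)}(2u-1) du` is, up to a constant, the `n`-th finite
difference at `0` of `i ↦ Γ(n+i+a+b+1)/Γ(i+a+b+k+2)`: a polynomial of degree `n-1-k` when
`k < n`, so the moment vanishes, and `i ↦ 1/(i+n+a+b+1)` when `k = n`, whose `n`-th difference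
is a Gamma quotient. Writing `u^i = (1-(1-u))^i` expresses `∫ (1-u)^a u^b uⁱ P` through these
moments; only `i = n` survives, leaving `cₙ` times the `k = n` moment.
-/

open Finset Polynomial Real fwdDiff

theorem sum_alternating_choose_mul_eq_fwdDiff_iter {R : Type*} [CommRing R] (f : R → R)
    (n : ℕ) (x : R) :
    ∑ i ∈ range (n + 1), (-1) ^ i * (n.choose i : R) * f (x + i) = (-1) ^ n * (Δ_[1])^[n] f x := by
  rw [fwdDiff_iter_eq_sum_shift, mul_sum]
  refine sum_congr rfl fun i hi => ?_
  have hin : i ≤ n := Nat.lt_succ_iff.mp (mem_range.mp hi)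
  obtain ⟨k, rfl⟩ := Nat.exists_eq_add_of_le hin
  have hsq : ((-1 : R) ^ k) ^ 2 = 1 := by rw [← pow_mul, pow_mul']; simp
  simp only [zsmul_eq_mul, nsmul_eq_mul, mul_one, Nat.add_sub_cancel_left]
  push_cast
  linear_combination -(-1 : R) ^ i * ((i + k).choose i : R) * f (x + i) * hsq

theorem sum_alternating_choose_mul_eval_eq_zero {R : Type*} [CommRing R] {p : R[X]} {n : ℕ}
    (hp : p.natDegree < n) (x : R) :
    ∑ i ∈ range (n + 1), (-1) ^ i * (n.choose i : R) * p.eval (x + i) = 0 := by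
  rw [sum_alternating_choose_mul_eq_fwdDiff_iter (fun y => p.eval y),
    fwdDiff_iter_eq_zero_of_degree_lt hp, Pi.zero_apply, mul_zero]

theorem Real.fwdDiff_iter_inv {x : ℝ} (hx : 0 < x) (n : ℕ) :
    (Δ_[1])^[n] (fun y : ℝ => y⁻¹) x = (-1) ^ n * n.factorial * Gamma x / Gamma (x + n + 1) := by
  induction n generalizing x with
  | zero =>
    simp only [Function.iterate_zero, id_eq, pow_zero, Nat.factorial_zero, Nat.cast_one,
      one_mul, CharP.cast_eq_zero, add_zero, Gamma_add_one hx.ne']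
    field_simp
  | succ n ih =>
    rw [Function.iterate_succ_apply', fwdDiff, ih hx, ih (by linarith)]
    have h1 : Gamma (x + 1) = x * Gamma x := Gamma_add_one hx.ne'
    have h2 : Gamma (x + 1 + n + 1) = (x + n + 1) * Gamma (x + n + 1) := by
      rw [show x + 1 + n + 1 = (x + n + 1) + 1 by ring, Gamma_add_one (by positivity)]
    have h3 : Gamma (x + ↑(n + 1) + 1) = Gamma (x + 1 + n + 1) := by push_cast; ring_nf
    rw [h1, h2, h3, h2]
    push_cast [Nat.factorial_succ]
    field_simp
    ring

theorem Real.Gamma_add_nat_div_Gamma_eq {x : ℝ} (hx : 0 < x) (m : ℕ) :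
    Gamma (x + m) / Gamma x = (ascPochhammer ℝ m).eval x := by
  induction m with
  | zero => simp [(Gamma_pos_of_pos hx).ne']
  | succ m ih =>
    rw [ascPochhammer_succ_right, eval_mul, ← ih, Nat.cast_succ, ← add_assoc,
      Gamma_add_one (by positivity)]
    simp only [eval_add, eval_X, eval_natCast]
    ring

theorem intervalIntegrable_one_sub_rpow_mul_rpow {α β : ℝ} (hα : -1 < α) (hβ : -1 < β) :
    IntervalIntegrable (fun u : ℝ => (1 - u) ^ α * u ^ β) volume 0 1 := by
  refine IntervalIntegrable.trans (b := 1 / 2) ?_ ?_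
  · refine (intervalIntegral.intervalIntegrable_rpow' hβ).continuousOn_mul ?_
    refine (continuousOn_const.sub continuousOn_id).rpow_const fun u hu => Or.inl ?_
    rw [Set.uIcc_of_le (by norm_num)] at hu
    simp only [Pi.sub_apply, id]
    linarith [hu.2]
  · have h := (intervalIntegral.intervalIntegrable_rpow' hα (a := 1 / 2) (b := 0)).comp_sub_left 1
    norm_num at h
    refine h.mul_continuousOn (continuousOn_id.rpow_const fun u hu => Or.inl ?_)
    rw [Set.uIcc_of_le (by norm_num)] at hu
    simp only [id]
    linarith [hu.1]

theorem integral_one_sub_rpow_mul_rpow {α β : ℝ} (hα : -1 < α) (hβ : -1 < β) :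
    ∫ u in (0 : ℝ)..1, (1 - u) ^ α * u ^ β = Gamma (α + 1) * Gamma (β + 1) / Gamma (α + β + 2) := by
  have hB := Complex.Gamma_mul_Gamma_eq_betaIntegral (s := (β + 1 : ℝ)) (t := (α + 1 : ℝ))
    (by simp; linarith) (by simp; linarith)
  have hint : Complex.betaIntegral (β + 1 : ℝ) (α + 1 : ℝ)
      = ((∫ u in (0 : ℝ)..1, (1 - u) ^ α * u ^ β : ℝ) : ℂ) := by
    rw [Complex.betaIntegral, ← intervalIntegral.integral_ofReal]
    refine intervalIntegral.integral_congr fun u hu => ?_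
    rw [Set.uIcc_of_le zero_le_one] at hu
    have h1 : (1 : ℂ) - u = ((1 - u : ℝ) : ℂ) := by push_cast; ring
    simp only [Complex.ofReal_mul, Complex.ofReal_cpow hu.1, h1,
      Complex.ofReal_cpow (sub_nonneg.2 hu.2)]
    push_cast
    ring_nf
  have hsum : ((β + 1 : ℝ) : ℂ) + ((α + 1 : ℝ) : ℂ) = ((α + β + 2 : ℝ) : ℂ) := by push_cast; ring
  rw [hint, hsum, Complex.Gamma_ofReal, Complex.Gamma_ofReal, Complex.Gamma_ofReal] at hB
  have hB' : Gamma (β + 1) * Gamma (α + 1)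
      = Gamma (α + β + 2) * ∫ u in (0 : ℝ)..1, (1 - u) ^ α * u ^ β := by exact_mod_cast hB
  have hG : Gamma (α + β + 2) ≠ 0 := (Gamma_pos_of_pos (by linarith)).ne'
  field_simp
  linear_combination -hB'

def jacobiCoeff (a b : ℝ) (n i : ℕ) : ℝ :=
  (-1) ^ n * (Gamma (n + 1 + b) / (n.factorial * Gamma (n + 1 + a + b))) *
    ((-1) ^ i * n.choose i * (Gamma (n + i + 1 + a + b) / Gamma (i + 1 + b)))

theorem jacobiP_two_mul_sub_one (a b : ℝ) (n : ℕ) (u : ℝ) :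
    jacobiP a b n (2 * u - 1) = ∑ i ∈ range (n + 1), jacobiCoeff a b n i * u ^ i := by
  rw [jacobiP, if_pos (Int.natCast_nonneg n), Int.toNat_natCast, mul_sum]
  refine sum_congr rfl fun i _ => ?_
  have h2 : (2 : ℝ) ^ (-(i : ℤ)) * (1 + (2 * u - 1)) ^ i = u ^ i := by
    rw [zpow_neg, zpow_natCast, show 1 + (2 * u - 1) = 2 * u by ring, mul_pow, inv_mul_cancel_left₀]
    positivity
  rw [jacobiCoeff, ← h2]
  ring

@[fun_prop]
theorem continuous_jacobiP (a b : ℝ) (n : ℤ) : Continuous (jacobiP a b n) := by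
  unfold jacobiP
  split_ifs <;> fun_prop

theorem intervalIntegrable_beta_mul_jacobiP {α β : ℝ} (hα : -1 < α) (hβ : -1 < β)
    (a b : ℝ) (n : ℤ) :
    IntervalIntegrable (fun u => (1 - u) ^ α * u ^ β * jacobiP a b n (2 * u - 1)) volume 0 1 :=
  (intervalIntegrable_one_sub_rpow_mul_rpow hα hβ).mul_continuousOn
    ((continuous_jacobiP a b n).comp (by fun_prop)).continuousOn

theorem integral_beta_mul_jacobiP {α β : ℝ} (hα : -1 < α) (hβ : -1 < β) (a b : ℝ) (n : ℕ) :
    ∫ u in (0 : ℝ)..1, (1 - u) ^ α * u ^ β * jacobiP a b n (2 * u - 1)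
      = ∑ i ∈ range (n + 1), jacobiCoeff a b n i *
          (Gamma (α + 1) * Gamma (β + i + 1) / Gamma (α + β + i + 2)) := by
  have hβi (i : ℕ) : -1 < β + i := by linarith
  have hexpand : Set.EqOn (fun u => (1 - u) ^ α * u ^ β * jacobiP a b n (2 * u - 1))
      (fun u => ∑ i ∈ range (n + 1), jacobiCoeff a b n i * ((1 - u) ^ α * u ^ (β + i)))
      (Set.Ioo 0 1) := fun u hu => by
    simp only [jacobiP_two_mul_sub_one, mul_sum, rpow_add_natCast hu.1.ne']
    exact sum_congr rfl fun i _ => by ring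
  rw [intervalIntegral.integral_congr_Ioo_of_le zero_le_one hexpand,
    intervalIntegral.integral_finsetSum fun i _ =>
      (intervalIntegrable_one_sub_rpow_mul_rpow hα (hβi i)).const_mul _]
  refine sum_congr rfl fun i _ => ?_
  rw [intervalIntegral.integral_const_mul, integral_one_sub_rpow_mul_rpow hα (hβi i)]
  ring_nf

theorem integral_beta_mul_jacobiP_eq_zero {a b : ℝ} (ha : -1 < a) (hb : -1 < b) {n k : ℕ}
    (hk : k < n) :
    ∫ u in (0 : ℝ)..1, (1 - u) ^ (a + k) * u ^ b * jacobiP a b n (2 * u - 1) = 0 := by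
  obtain ⟨m, rfl⟩ : ∃ m, n = k + 1 + m := ⟨n - (k + 1), by omega⟩
  rw [integral_beta_mul_jacobiP (by linarith) hb]
  set K : ℝ := (-1) ^ (k + 1 + m) * (Gamma ((k + 1 + m : ℕ) + 1 + b) /
    ((k + 1 + m).factorial * Gamma ((k + 1 + m : ℕ) + 1 + a + b)))
  have hterm : ∀ i ∈ range (k + 1 + m + 1),
      jacobiCoeff a b (k + 1 + m) i * (Gamma (a + k + 1) * Gamma (b + i + 1) /
        Gamma (a + k + b + i + 2))
      = K * Gamma (a + k + 1) * ((-1) ^ i * ((k + 1 + m).choose i : ℝ) *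
          (ascPochhammer ℝ m).eval (a + b + k + 2 + i)) := by
    intro i _
    have hx : 0 < a + b + k + 2 + i := by linarith
    rw [← Gamma_add_nat_div_Gamma_eq hx, jacobiCoeff]
    have h1 : Gamma (i + 1 + b) ≠ 0 := (Gamma_pos_of_pos (by linarith)).ne'
    rw [show b + i + 1 = i + 1 + b by ring, show a + k + b + i + 2 = a + b + k + 2 + i by ring,
      show a + b + k + 2 + i + m = ((k + 1 + m : ℕ) : ℝ) + i + 1 + a + b by push_cast; ring]
    simp only [K]
    field_simp
  rw [sum_congr rfl hterm, ← mul_sum,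
    sum_alternating_choose_mul_eval_eq_zero (by rw [ascPochhammer_natDegree]; omega), mul_zero]

theorem integral_beta_mul_jacobiP_self {a b : ℝ} (ha : -1 < a) (hb : -1 < b) (hab : -1 < a + b)
    (n : ℕ) :
    ∫ u in (0 : ℝ)..1, (1 - u) ^ (a + n) * u ^ b * jacobiP a b n (2 * u - 1)
      = (-1) ^ n * Gamma (n + b + 1) * Gamma (n + a + 1) / Gamma (2 * n + a + b + 2) := by
  set e : ℝ := n + 1 + a + b with he
  have he0 : 0 < e := by linarith
  rw [integral_beta_mul_jacobiP (by linarith) hb]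
  set K : ℝ := (-1) ^ n * (Gamma (n + 1 + b) / (n.factorial * Gamma e))
  have hterm : ∀ i ∈ range (n + 1),
      jacobiCoeff a b n i * (Gamma (a + n + 1) * Gamma (b + i + 1) / Gamma (a + n + b + i + 2))
      = K * Gamma (a + n + 1) * ((-1) ^ i * (n.choose i : ℝ) * (fun y : ℝ => y⁻¹) (e + i)) := by
    intro i _
    have hei : 0 < e + i := by linarith
    have h1 : Gamma (i + 1 + b) ≠ 0 := (Gamma_pos_of_pos (by linarith)).ne'
    rw [show b + i + 1 = i + 1 + b by ring, show a + n + b + i + 2 = (e + i) + 1 by ring,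
      Gamma_add_one hei.ne', jacobiCoeff, ← he, show (n : ℝ) + i + 1 + a + b = e + i by ring]
    simp only [K]
    field_simp
  have hsum := sum_alternating_choose_mul_eq_fwdDiff_iter (fun y : ℝ => y⁻¹) n e
  rw [sum_congr rfl hterm, ← mul_sum, hsum, fwdDiff_iter_inv he0]
  have hsq : ((-1 : ℝ) ^ n) ^ 2 = 1 := by rw [← pow_mul, pow_mul']; simp
  simp only [K]
  rw [show e + n + 1 = 2 * n + a + b + 2 by ring, show (n : ℝ) + b + 1 = n + 1 + b by ring,
    show a + n + 1 = n + a + 1 by ring]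
  field_simp
  rw [hsq, one_mul]

theorem integral_beta_mul_pow_mul_jacobiP {a b : ℝ} (ha : -1 < a) (hb : -1 < b) (n i : ℕ) :
    ∫ u in (0 : ℝ)..1, (1 - u) ^ a * u ^ b * (u ^ i * jacobiP a b n (2 * u - 1))
      = ∑ j ∈ range (i + 1), (-1) ^ j * (i.choose j : ℝ) *
          ∫ u in (0 : ℝ)..1, (1 - u) ^ (a + j) * u ^ b * jacobiP a b n (2 * u - 1) := by
  have hexpand : Set.EqOn (fun u => (1 - u) ^ a * u ^ b * (u ^ i * jacobiP a b n (2 * u - 1)))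
      (fun u => ∑ j ∈ range (i + 1), (-1) ^ j * (i.choose j : ℝ) *
        ((1 - u) ^ (a + j) * u ^ b * jacobiP a b n (2 * u - 1))) (Set.Ioo 0 1) := fun u hu => by
    have hu1 : 1 - u ≠ 0 := by linarith [hu.2]
    simp only [rpow_add_natCast hu1]
    have hpow := add_pow (-(1 - u)) 1 i
    rw [show -(1 - u) + 1 = u by ring] at hpow
    rw [hpow, sum_mul, mul_sum]
    refine sum_congr rfl fun j _ => ?_
    rw [neg_pow]
    ring
  rw [intervalIntegral.integral_congr_Ioo_of_le zero_le_one hexpand,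
    intervalIntegral.integral_finsetSum fun j _ =>
      (intervalIntegrable_beta_mul_jacobiP (by linarith) hb a b n).const_mul _]
  simp_rw [intervalIntegral.integral_const_mul]

theorem integral_jacobiP_sq {a b : ℝ} (ha : -1 < a) (hb : -1 < b) (hab : -1 < a + b) (n : ℕ) :
    ∫ u in (0 : ℝ)..1, (1 - u) ^ a * u ^ b * jacobiP a b n (2 * u - 1) ^ 2
      = Gamma (n + a + 1) * Gamma (n + b + 1) /
          ((2 * n + a + b + 1) * Gamma (n + 1) * Gamma (n + a + b + 1)) := by
  have hexpand : ∀ u : ℝ, (1 - u) ^ a * u ^ b * jacobiP a b n (2 * u - 1) ^ 2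
      = ∑ i ∈ range (n + 1), jacobiCoeff a b n i *
          ((1 - u) ^ a * u ^ b * (u ^ i * jacobiP a b n (2 * u - 1))) := fun u => by
    rw [sq]
    nth_rw 1 [jacobiP_two_mul_sub_one]
    rw [sum_mul, mul_sum]
    exact sum_congr rfl fun i _ => by ring
  have hlower : ∀ i < n,
      ∫ u in (0 : ℝ)..1, (1 - u) ^ a * u ^ b * (u ^ i * jacobiP a b n (2 * u - 1)) = 0 :=
    fun i hi => by
      rw [integral_beta_mul_pow_mul_jacobiP ha hb]
      exact sum_eq_zero fun j hj => by
        rw [integral_beta_mul_jacobiP_eq_zero ha hb (by linarith [mem_range.mp hj]), mul_zero]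
  have htop : ∫ u in (0 : ℝ)..1, (1 - u) ^ a * u ^ b * (u ^ n * jacobiP a b n (2 * u - 1))
      = (-1) ^ n *
          ((-1) ^ n * Gamma (n + b + 1) * Gamma (n + a + 1) / Gamma (2 * n + a + b + 2)) := by
    rw [integral_beta_mul_pow_mul_jacobiP ha hb, sum_range_succ, sum_eq_zero, zero_add,
      Nat.choose_self, Nat.cast_one, mul_one, integral_beta_mul_jacobiP_self ha hb hab]
    exact fun j hj => by
      rw [integral_beta_mul_jacobiP_eq_zero ha hb (mem_range.mp hj), mul_zero]
  have hint (i : ℕ) : IntervalIntegrable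
      (fun u => (1 - u) ^ a * u ^ b * (u ^ i * jacobiP a b n (2 * u - 1))) volume 0 1 :=
    (intervalIntegrable_one_sub_rpow_mul_rpow ha hb).mul_continuousOn (by fun_prop)
  simp_rw [hexpand]
  rw [intervalIntegral.integral_finsetSum fun i _ => (hint i).const_mul _,
    sum_range_succ, sum_eq_zero fun i hi => by
      rw [intervalIntegral.integral_const_mul, hlower i (mem_range.mp hi), mul_zero],
    zero_add, intervalIntegral.integral_const_mul, htop, jacobiCoeff]
  have hsign : ((-1 : ℝ) ^ n) ^ 4 = 1 := by rw [← pow_mul, pow_mul']; norm_num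
  have hd : 0 < 2 * n + a + b + 1 := by linarith
  have hG2 : Gamma (2 * n + a + b + 2) = (2 * n + a + b + 1) * Gamma (2 * n + a + b + 1) := by
    rw [← Gamma_add_one hd.ne']
    ring_nf
  have h3 : Gamma (2 * n + a + b + 1) ≠ 0 := (Gamma_pos_of_pos (by linarith)).ne'
  rw [hG2, Gamma_nat_eq_factorial, Nat.choose_self, Nat.cast_one,
    show (n : ℝ) + 1 + b = n + b + 1 by ring, show (n : ℝ) + 1 + a + b = n + a + b + 1 by ring,
    show (n : ℝ) + n + 1 + a + b = 2 * n + a + b + 1 by ring]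
  set G := Gamma (2 * n + a + b + 1)
  field_simp
  rw [hsign, one_mul]

theorem integral_unitDisk_eq_mul_of_polar {f : ℝ × ℝ → ℝ} {g h : ℝ → ℝ}
    (hf : ∀ r θ : ℝ, 0 < r → r < 1 → f (r * cos θ, r * sin θ) = g r * h θ) :
    ∫ p in unitDisk, f p = (∫ r in (0 : ℝ)..1, r * g r) * ∫ θ in -π..π, h θ := by
  have hdisk : MeasurableSet unitDisk := measurableSet_lt (by fun_prop) measurable_const
  have hEq : Set.EqOn (fun p : ℝ × ℝ => p.1 • unitDisk.indicator f (polarCoord.symm p))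
      (fun p => (Set.Ioo 0 1).indicator (fun r => r * g r) p.1 * h p.2) polarCoord.target := by
    rintro ⟨r, θ⟩ ⟨hr, -⟩
    have hr : 0 < r := hr
    dsimp only
    have hmem : polarCoord.symm (r, θ) ∈ unitDisk ↔ r ∈ Set.Ioo 0 1 := by
      simp only [polarCoord_symm_apply, Set.mem_Ioo, hr, true_and]
      change (r * cos θ) ^ 2 + (r * sin θ) ^ 2 < 1 ↔ r < 1
      rw [show (r * cos θ) ^ 2 + (r * sin θ) ^ 2 = r ^ 2 by
        linear_combination r ^ 2 * cos_sq_add_sin_sq θ]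
      exact sq_lt_one_iff₀ hr.le
    by_cases hr1 : r ∈ Set.Ioo 0 1
    · rw [smul_eq_mul, Set.indicator_of_mem (hmem.2 hr1), Set.indicator_of_mem hr1,
        polarCoord_symm_apply, hf r θ hr hr1.2]
      ring
    · rw [Set.indicator_of_notMem (mt hmem.1 hr1), Set.indicator_of_notMem hr1]
      simp
  have htarget : MeasurableSet polarCoord.target := by
    rw [polarCoord_target]
    exact measurableSet_Ioi.prod measurableSet_Ioo
  rw [← integral_indicator hdisk, ← integral_comp_polarCoord_symm,
    setIntegral_congr_fun htarget hEq, polarCoord_target, Measure.volume_eq_prod,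
    setIntegral_prod_mul, setIntegral_indicator measurableSet_Ioo,
    Set.inter_eq_self_of_subset_right Set.Ioo_subset_Ioi_self,
    intervalIntegral.integral_of_le zero_le_one,
    intervalIntegral.integral_of_le (by linarith [pi_pos]),
    integral_Ioc_eq_integral_Ioo, integral_Ioc_eq_integral_Ioo]

theorem integral_mul_comp_sq {φ : ℝ → ℝ} (hφ : Continuous φ) :
    ∫ r in (0 : ℝ)..1, r * φ (r ^ 2) = (1 / 2) * ∫ u in (0 : ℝ)..1, φ u := by
  have hsub := intervalIntegral.integral_deriv_smul_comp (a := 0) (b := 1) (f := fun r => r ^ 2)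
    (f' := fun r => 2 * r) (g := φ) (fun r _ => by simpa using hasDerivAt_pow 2 r)
    (by fun_prop) hφ
  simp only [Function.comp_def, smul_eq_mul] at hsub
  norm_num at hsub
  rw [← hsub, ← intervalIntegral.integral_const_mul]
  exact intervalIntegral.integral_congr fun r _ => by ring

def angularH (l : ℕ) (μ : ℤ) (θ : ℝ) : ℝ :=
  if l = 0 then 1 / 2 else if μ = 1 then cos (l * θ) else sin (l * θ)

theorem mul_cos_add_mul_sin_mul_I_pow (r θ : ℝ) (l : ℕ) :
    ((r * cos θ : ℝ) + (r * sin θ : ℝ) * Complex.I : ℂ) ^ l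
      = (r ^ l * cos (l * θ) : ℝ) + (r ^ l * sin (l * θ) : ℝ) * Complex.I := by
  rw [show ((r * cos θ : ℝ) + (r * sin θ : ℝ) * Complex.I : ℂ)
      = r * (Complex.cos θ + Complex.sin θ * Complex.I) by push_cast; ring,
    mul_pow, Complex.cos_add_sin_mul_I_pow]
  push_cast
  ring

theorem solidH_polar {l : ℕ} {μ : ℤ} (hμ : μ = 1 ∨ μ = -1) (hlμ : ¬(l = 0 ∧ μ = -1)) (r θ : ℝ) :
    solidH l μ (r * cos θ, r * sin θ) = r ^ l * angularH l μ θ := by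
  rcases eq_or_ne l 0 with rfl | hl
  · obtain rfl : μ = 1 := hμ.resolve_right fun h => hlμ ⟨rfl, h⟩
    simp [solidH, angularH]
  · rcases hμ with rfl | rfl <;>
      simp [solidH, angularH, hl, Nat.pos_of_ne_zero hl, mul_cos_add_mul_sin_mul_I_pow,
        -Complex.ofReal_mul]

theorem integral_angularH_sq (l : ℕ) (μ : ℤ) : ∫ θ in -π..π, angularH l μ θ ^ 2 = Cc l := by
  unfold angularH Cc
  rcases eq_or_ne l 0 with rfl | hl
  · simp only [↓reduceIte, one_div, inv_pow, intervalIntegral.integral_const, sub_neg_eq_add,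
      smul_eq_mul]
    ring
  · have hl' : (l : ℝ) ≠ 0 := Nat.cast_ne_zero.mpr hl
    have hsin : sin (l * π) = 0 := sin_nat_mul_pi l
    simp only [hl, if_false]
    split_ifs
    · rw [intervalIntegral.integral_comp_mul_left (fun x => cos x ^ 2) hl', integral_cos_sq,
        mul_neg, sin_neg, hsin, smul_eq_mul]
      field_simp
      ring
    · rw [intervalIntegral.integral_comp_mul_left (fun x => sin x ^ 2) hl', integral_sin_sq,
        mul_neg, sin_neg, hsin, smul_eq_mul]
      field_simp
      ring

/-- explicit value of the squared weighted norm of the basis functions: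
`∫_Ω (1-r²)^γ (𝒱_{l,μ} P_n^{(γ,l)}(2r²-1))² = [C_{l,μ}/(2(2n+γ+l+1))]
  · Γ(n+γ+1)Γ(n+l+1)/(Γ(n+1)Γ(n+γ+l+1))`, which is strictly positive (and, being
independent of `μ`, the same for `μ = ±1` when `l ≥ 1`). -/
theorem stmt19 (γ : ℝ) (hγ : 0 ≤ γ) (l n : ℕ) (μ : ℤ) (hμ : μ = 1 ∨ μ = -1)
    (hlμ : ¬(l = 0 ∧ μ = -1)) :
    (∫ p in unitDisk, (1 - (p.1 ^ 2 + p.2 ^ 2)) ^ γ *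
        (solidH (l : ℤ) μ p *
          jacobiP γ (l : ℝ) (n : ℤ) (2 * (p.1 ^ 2 + p.2 ^ 2) - 1)) ^ 2) =
      Cc l / (2 * (2 * (n : ℝ) + γ + (l : ℝ) + 1)) *
        (Real.Gamma ((n : ℝ) + γ + 1) * Real.Gamma ((n : ℝ) + (l : ℝ) + 1) /
          (Real.Gamma ((n : ℝ) + 1) * Real.Gamma ((n : ℝ) + γ + (l : ℝ) + 1))) ∧
    0 < Cc l / (2 * (2 * (n : ℝ) + γ + (l : ℝ) + 1)) *
        (Real.Gamma ((n : ℝ) + γ + 1) * Real.Gamma ((n : ℝ) + (l : ℝ) + 1) /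
          (Real.Gamma ((n : ℝ) + 1) * Real.Gamma ((n : ℝ) + γ + (l : ℝ) + 1))) := by
  have hl : (0 : ℝ) ≤ l := Nat.cast_nonneg l
  set φ : ℝ → ℝ := fun u => (1 - u) ^ γ * u ^ (l : ℝ) * jacobiP γ l n (2 * u - 1) ^ 2
  have hφ : Continuous φ := by
    have := continuous_rpow_const hγ
    have := continuous_rpow_const hl
    fun_prop
  have hpolar := integral_unitDisk_eq_mul_of_polar (g := fun r => φ (r ^ 2))
    (h := fun θ => angularH l μ θ ^ 2)
    (f := fun p : ℝ × ℝ => (1 - (p.1 ^ 2 + p.2 ^ 2)) ^ γ *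
        (solidH (l : ℤ) μ p * jacobiP γ (l : ℝ) (n : ℤ) (2 * (p.1 ^ 2 + p.2 ^ 2) - 1)) ^ 2)
    fun r θ _ _ => by
      rw [solidH_polar hμ hlμ, show (r * cos θ) ^ 2 + (r * sin θ) ^ 2 = r ^ 2 by
        linear_combination r ^ 2 * cos_sq_add_sin_sq θ]
      simp only [φ, rpow_natCast]
      ring
  have hCc : 0 < Cc l := by unfold Cc; split_ifs <;> positivity
  rw [hpolar, integral_mul_comp_sq hφ, integral_jacobiP_sq (by linarith) (by linarith)
    (by linarith) n, integral_angularH_sq]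
  exact ⟨by field_simp, by positivity⟩
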